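/- Let n ≥ 2, let U ⊂ ℝ^n be the punctured unit ball, and let g ∈ C_c^1(U). Define f(x) := |x|^{1−n/2} X₁(|x|)^{−1/2} g(x), with X₁(t) := (1 − log t)^{−1}. Then ∫_U |∇f|² dx − ((n−2)/2)² ∫_U |f|²/|x|² dx − (1/4) ∫_U (|f|²/|x|²) X₁(|x|)² dx = ∫_U |x|^{2−n} |∇g|² X₁(|x|)^{−1} dx. -/

import Mathlib

open MeasureTheory Real Filter
set_option maxHeartbeats 1000000
open scoped Topology Manifold

/-- `X₁ t = (1 - log t)⁻¹`. -/
noncomputable def X₁ (t : ℝ) : ℝ := (1 - Real.log t)⁻¹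



noncomputable def ftQ (n : ℕ) (y : EuclideanSpace ℝ (Fin n)) : ℝ := ∑ i, y i ^ 2

noncomputable def ftDq (n : ℕ) (x : EuclideanSpace ℝ (Fin n)) :
    EuclideanSpace ℝ (Fin n) →L[ℝ] ℝ := ∑ i, (2 * x i) • EuclideanSpace.proj (𝕜 := ℝ) i

lemma ftQ_eq_norm (n : ℕ) (y : EuclideanSpace ℝ (Fin n)) : ftQ n y = ‖y‖ ^ 2 := by
  rw [EuclideanSpace.norm_eq, Real.sq_sqrt (by positivity)]
  unfold ftQ
  congr 1; ext i; rw [Real.norm_eq_abs, sq_abs]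

lemma ftQ_pos {n : ℕ} {y : EuclideanSpace ℝ (Fin n)} (hy : 0 < ‖y‖) : 0 < ftQ n y := by
  rw [ftQ_eq_norm]; positivity

lemma ftQ_hasFDerivAt (n : ℕ) (x : EuclideanSpace ℝ (Fin n)) :
    HasFDerivAt (ftQ n) (ftDq n x) x := by
  have h : ∀ i : Fin n, HasFDerivAt (fun y : EuclideanSpace ℝ (Fin n) => y i ^ 2)
      ((2 * x i) • EuclideanSpace.proj (𝕜 := ℝ) i) x := by
    intro i
    have h1 : HasFDerivAt (fun y : EuclideanSpace ℝ (Fin n) => y i)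
        (EuclideanSpace.proj (𝕜 := ℝ) i) x := (EuclideanSpace.proj (𝕜 := ℝ) i).hasFDerivAt
    have h3 : HasFDerivAt (fun y : EuclideanSpace ℝ (Fin n) => y i * y i)
        (x i • EuclideanSpace.proj (𝕜 := ℝ) i + x i • EuclideanSpace.proj (𝕜 := ℝ) i) x :=
      h1.mul h1
    have he : (fun y : EuclideanSpace ℝ (Fin n) => y i ^ 2)
        = fun y => y i * y i := by ext y; ring
    rw [he]
    convert h3 using 1
    ext w; simp; ring
  exact HasFDerivAt.fun_sum (fun i _ => h i)

lemma ftQ_continuous (n : ℕ) : Continuous (ftQ n) := by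
  unfold ftQ
  exact continuous_finset_sum _ fun i _ => ((EuclideanSpace.proj (𝕜 := ℝ) i).continuous).pow 2

lemma ftDq_apply (n : ℕ) (x : EuclideanSpace ℝ (Fin n)) (j : Fin n) :
    ftDq n x (EuclideanSpace.single j 1) = 2 * x j := by
  unfold ftDq
  rw [ContinuousLinearMap.sum_apply]
  have : ∀ i : Fin n, ((2 * x i) • EuclideanSpace.proj (𝕜 := ℝ) i) (EuclideanSpace.single j (1:ℝ))
      = if i = j then 2 * x i else 0 := by
    intro i
    by_cases h : i = j <;> simp [h, EuclideanSpace.single_apply, eq_comm]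
  rw [Finset.sum_congr rfl fun i _ => this i]
  simp

lemma ft_dual_norm_sq {n : ℕ} (L : EuclideanSpace ℝ (Fin n) →L[ℝ] ℝ) :
    ‖L‖ ^ 2 = ∑ i, (L (EuclideanSpace.single i 1)) ^ 2 := by
  set v := (InnerProductSpace.toDual ℝ (EuclideanSpace ℝ (Fin n))).symm L with hv
  have hvw : ∀ w, inner ℝ v w = L w := fun w => InnerProductSpace.toDual_symm_apply
  have hnorm : ‖v‖ = ‖L‖ := LinearIsometryEquiv.norm_map _ L
  have h1 : ∀ i, L (EuclideanSpace.single i 1) = v i := by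
    intro i; rw [← hvw]; rw [EuclideanSpace.inner_single_right]; simp
  have h2 : ‖v‖ ^ 2 = ∑ i, (v i) ^ 2 := by
    rw [← real_inner_self_eq_norm_sq, PiLp.inner_apply]
    simp [RCLike.inner_apply, sq]
  rw [← hnorm, h2]
  congr 1; ext i; rw [h1]

lemma ft_apply_eq_sum {n : ℕ} (L : EuclideanSpace ℝ (Fin n) →L[ℝ] ℝ)
    (x : EuclideanSpace ℝ (Fin n)) :
    L x = ∑ i, x i * L (EuclideanSpace.single i 1) := by
  have hx : x = ∑ i, x i • EuclideanSpace.single i (1:ℝ) := by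
    ext j
    have : ∀ (s : Finset (Fin n)), (∑ i ∈ s, x i • EuclideanSpace.single i (1:ℝ)) j
        = ∑ i ∈ s, x i * (EuclideanSpace.single i (1:ℝ) j) := by
      intro s
      induction s using Finset.induction with
      | empty => simp
      | insert a s' h ih => rw [Finset.sum_insert h, Finset.sum_insert h, ← ih]; rfl
    rw [this]
    simp [EuclideanSpace.single_apply]
  conv_lhs => rw [hx]
  rw [map_sum]
  simp



noncomputable def ftGf (a t : ℝ) : ℝ := t ^ (a/2) * (1 - Real.log t / 2) ^ ((1:ℝ)/2)
noncomputable def ftGf' (a t : ℝ) : ℝ :=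
  t ^ (a/2-1) * ((a/2) * (1 - Real.log t / 2) ^ ((1:ℝ)/2)
    - (1/4) * ((1 - Real.log t / 2) ^ ((1:ℝ)/2))⁻¹)
noncomputable def ftPf (a t : ℝ) : ℝ := t ^ (a-1) * (a * (1 - Real.log t / 2) - 1/2)
noncomputable def ftPf' (a t : ℝ) : ℝ :=
  t ^ (a-2) * ((a-1) * (a * (1 - Real.log t / 2) - 1/2) - a/2)

lemma ft_upos {t : ℝ} (ht0 : 0 < t) (ht1 : t < 1) : 0 < 1 - Real.log t / 2 := by
  have := Real.log_neg ht0 ht1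
  linarith

lemma ft_hasDerivAt_u {t : ℝ} (ht0 : 0 < t) :
    HasDerivAt (fun s => 1 - Real.log s / 2) (-(t⁻¹/2)) t := by
  have h := (Real.hasDerivAt_log ht0.ne').div_const 2
  exact h.const_sub 1

lemma ft_hasDerivAt_P {a t : ℝ} (ht0 : 0 < t) : HasDerivAt (ftPf a) (ftPf' a t) t := by
  have h1 : HasDerivAt (fun s : ℝ => s ^ (a-1)) ((a-1) * t^(a-1-1)) t :=
    Real.hasDerivAt_rpow_const (Or.inl ht0.ne')
  have h2 : HasDerivAt (fun s => a * (1 - Real.log s / 2) - 1/2) (a * -(t⁻¹/2)) t :=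
    ((ft_hasDerivAt_u ht0).const_mul a).sub_const (1/2)
  have h := h1.mul h2
  refine h.congr_deriv (Eq.symm ?_)
  unfold ftPf'
  have e1 : t ^ (a-1-1) = t ^ (a-2) := by rw [show a-1-1 = a-2 by ring]
  have e2 : t ^ (a-1) = t ^ (a-2) * t := by
    rw [← Real.rpow_add_one ht0.ne']; rw [show a-2+1 = a-1 by ring]
  rw [e1, e2]
  field_simp
  ring

lemma ft_hasDerivAt_G {a t : ℝ} (ht0 : 0 < t) (ht1 : t < 1) :
    HasDerivAt (ftGf a) (ftGf' a t) t := by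
  have hu0 := ft_upos ht0 ht1
  have h1 : HasDerivAt (fun s : ℝ => s ^ (a/2)) ((a/2) * t^(a/2-1)) t :=
    Real.hasDerivAt_rpow_const (Or.inl ht0.ne')
  have h2 : HasDerivAt (fun s => (1 - Real.log s / 2) ^ ((1:ℝ)/2))
      (-(t⁻¹/2) * ((1:ℝ)/2) * (1 - Real.log t / 2) ^ ((1:ℝ)/2 - 1)) t :=
    (ft_hasDerivAt_u ht0).rpow_const (Or.inl hu0.ne')
  have h := h1.mul h2
  refine h.congr_deriv (Eq.symm ?_)
  unfold ftGf'
  set u := 1 - Real.log t / 2 with hud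
  have e0 : u ^ ((1:ℝ)/2 - 1) = u ^ ((1:ℝ)/2) * u⁻¹ := by
    rw [← Real.rpow_neg_one u, ← Real.rpow_add hu0]
    rw [show (1:ℝ)/2 + -1 = (1:ℝ)/2 - 1 by ring]
  have e2 : t ^ (a/2) = t ^ (a/2-1) * t := by
    rw [← Real.rpow_add_one ht0.ne']; rw [show a/2-1+1 = a/2 by ring]
  have hw2 : (u ^ ((1:ℝ)/2))^2 = u := by
    rw [← Real.rpow_natCast (u ^ ((1:ℝ)/2)) 2, ← Real.rpow_mul hu0.le]
    norm_num
  have hw : u ^ ((1:ℝ)/2) ≠ 0 := (Real.rpow_pos_of_pos hu0 _).ne'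
  set w := u ^ ((1:ℝ)/2) with hwd
  rw [e0, e2, ← hw2]
  field_simp
  ring

lemma ft_idG2 {a t : ℝ} (ht0 : 0 < t) (ht1 : t < 1) :
    ftGf a t ^ 2 = t ^ a * (1 - Real.log t / 2) := by
  have hu := ft_upos ht0 ht1
  unfold ftGf
  rw [mul_pow, ← Real.rpow_natCast (t ^ (a/2)) 2, ← Real.rpow_natCast ((1 - Real.log t / 2) ^ ((1:ℝ)/2)) 2,
    ← Real.rpow_mul ht0.le, ← Real.rpow_mul hu.le]
  norm_num

lemma ft_idGG {a t : ℝ} (ht0 : 0 < t) (ht1 : t < 1) :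
    2 * ftGf a t * ftGf' a t = ftPf a t := by
  have hu0 := ft_upos ht0 ht1
  unfold ftGf ftGf' ftPf
  set u := 1 - Real.log t / 2 with hud
  have hw2 : (u ^ ((1:ℝ)/2))^2 = u := by
    rw [← Real.rpow_natCast (u ^ ((1:ℝ)/2)) 2, ← Real.rpow_mul hu0.le]
    norm_num
  have hw : u ^ ((1:ℝ)/2) ≠ 0 := (Real.rpow_pos_of_pos hu0 _).ne'
  have hB : t ^ (a-1) = t^(a/2) * t^(a/2-1) := by
    rw [← Real.rpow_add ht0]; rw [show a/2 + (a/2-1) = a-1 by ring]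
  set w := u ^ ((1:ℝ)/2) with hwd
  rw [hB, ← hw2]
  field_simp
  ring

lemma ft_idMain {a t : ℝ} (ht0 : 0 < t) (ht1 : t < 1) :
    4 * t * ftGf' a t ^ 2 + a * t ^ (a-1)
      = a^2 * t^(a-1) * (1 - Real.log t / 2) + (1/4) * t^(a-1) * (1 - Real.log t / 2)⁻¹ := by
  have hu0 := ft_upos ht0 ht1
  unfold ftGf'
  set u := 1 - Real.log t / 2 with hud
  have hw2 : (u ^ ((1:ℝ)/2))^2 = u := by
    rw [← Real.rpow_natCast (u ^ ((1:ℝ)/2)) 2, ← Real.rpow_mul hu0.le]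
    norm_num
  have hw : u ^ ((1:ℝ)/2) ≠ 0 := (Real.rpow_pos_of_pos hu0 _).ne'
  have e2 : t ^ (a-1) = t * (t ^ (a/2-1))^2 := by
    rw [← Real.rpow_natCast (t ^ (a/2-1)) 2, ← Real.rpow_mul ht0.le, mul_comm,
      ← Real.rpow_add_one ht0.ne']
    push_cast
    rw [show (a/2-1)*2+1 = a-1 by ring]
  set w := u ^ ((1:ℝ)/2) with hwd
  rw [e2, ← hw2]
  field_simp
  ring

lemma ft_idDiv {a t : ℝ} (n : ℕ) (hn : (n:ℝ) = 2 - 2*a) (ht0 : 0 < t) :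
    (n:ℝ) * ftPf a t + 2 * t * ftPf' a t = -a * t ^ (a-1) := by
  unfold ftPf ftPf'
  have e2 : t * t ^ (a-2) = t ^ (a-1) := by
    rw [mul_comm, ← Real.rpow_add_one ht0.ne']; rw [show a-2+1 = a-1 by ring]
  rw [hn]
  linear_combination (2*((a-1)*(a*(1 - Real.log t/2)-1/2) - a/2)) * e2



lemma ft_contAt_u {t : ℝ} (ht : 0 < t) :
    ContinuousAt (fun s => 1 - Real.log s / 2) t :=
  continuousAt_const.sub ((Real.continuousAt_log ht.ne').div_const 2)

lemma ft_contAt_Gf (a : ℝ) {t : ℝ} (ht : 0 < t) : ContinuousAt (ftGf a) t :=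
  (continuousAt_id.rpow_const (Or.inl ht.ne')).mul
    ((ft_contAt_u ht).rpow_const (Or.inr (by norm_num)))

lemma ft_contAt_Pf (a : ℝ) {t : ℝ} (ht : 0 < t) : ContinuousAt (ftPf a) t :=
  (continuousAt_id.rpow_const (Or.inl ht.ne')).mul
    (((ft_contAt_u ht).const_mul a).sub continuousAt_const)

lemma ft_contAt_Pf' (a : ℝ) {t : ℝ} (ht : 0 < t) : ContinuousAt (ftPf' a) t :=
  (continuousAt_id.rpow_const (Or.inl ht.ne')).mul
    (((((ft_contAt_u ht).const_mul a).sub continuousAt_const).const_mul (a-1)).sub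
      continuousAt_const)

lemma ft_contAt_Gf' (a : ℝ) {t : ℝ} (ht : 0 < t) (ht1 : t < 1) :
    ContinuousAt (ftGf' a) t := by
  have hu := ft_upos ht ht1
  have hw : (1 - Real.log t / 2) ^ ((1:ℝ)/2) ≠ 0 := (Real.rpow_pos_of_pos hu _).ne'
  exact (continuousAt_id.rpow_const (Or.inl ht.ne')).mul
    ((((ft_contAt_u ht).rpow_const (Or.inr (by norm_num))).const_mul (a/2)).sub
      (((((ft_contAt_u ht).rpow_const (Or.inr (by norm_num))).inv₀ hw)).const_mul (1/4)))

theorem filippas_tertikas_identity (n : ℕ) (hn : 2 ≤ n)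
    (U : Set (EuclideanSpace ℝ (Fin n)))
    (hU : U = {x : EuclideanSpace ℝ (Fin n) | 0 < ‖x‖ ∧ ‖x‖ < 1})
    (g : EuclideanSpace ℝ (Fin n) → ℝ)
    (hg : ContDiff ℝ 1 g) (hgc : HasCompactSupport g) (hgs : tsupport g ⊆ U)
    (f : EuclideanSpace ℝ (Fin n) → ℝ)
    (hf : ∀ x, f x = ‖x‖ ^ ((1 : ℝ) - n / 2) * (X₁ ‖x‖) ^ (-(1 : ℝ) / 2) * g x) :
    ((∫ x in U, ‖fderiv ℝ f x‖ ^ 2)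
      - (((n : ℝ) - 2) / 2) ^ 2 * ∫ x in U, (f x) ^ 2 / ‖x‖ ^ 2)
      - (1 / 4) * ∫ x in U, (f x) ^ 2 / ‖x‖ ^ 2 * (X₁ ‖x‖) ^ 2 =
      ∫ x in U, ‖x‖ ^ ((2 : ℝ) - n) * ‖fderiv ℝ g x‖ ^ 2 * (X₁ ‖x‖)⁻¹ := by
  classical
  subst hU
  by_cases hg0 : ∀ x, g x = 0
  · have hfz : f = fun _ => (0:ℝ) := funext fun x => by rw [hf, hg0, mul_zero]
    have hgz : g = fun _ => (0:ℝ) := funext hg0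
    rw [hfz, hgz]
    simp
  push_neg at hg0
  set a : ℝ := 1 - (n:ℝ)/2 with ha
  have hna : (n:ℝ) = 2 - 2*a := by rw [ha]; ring
  set K := tsupport g with hK
  have hKc : IsCompact K := hgc
  have hKcl : IsClosed K := isClosed_tsupport g
  have hKU : ∀ x ∈ K, 0 < ‖x‖ ∧ ‖x‖ < 1 := fun x hx => hgs hx
  have hKne : K.Nonempty := by
    obtain ⟨x, hx⟩ := hg0
    exact ⟨x, subset_tsupport g hx⟩
  have h0K : (0 : EuclideanSpace ℝ (Fin n)) ∉ K := fun h => by simpa using (hKU 0 h).1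
  set δ := Metric.infDist 0 K with hδdef
  have hδ : 0 < δ := (hKcl.notMem_iff_infDist_pos hKne).mp h0K
  have hKnorm : ∀ x ∈ K, δ ≤ ‖x‖ := fun x hx => by
    simpa [dist_zero_left] using Metric.infDist_le_dist_of_mem (x := (0 : EuclideanSpace ℝ (Fin n))) hx
  -- cutoff function
  obtain ⟨χ, hχ0, hχ1, hχ01⟩ :=
    exists_contMDiffMap_zero_one_of_isClosed (𝓘(ℝ, EuclideanSpace ℝ (Fin n))) (n := (⊤ : ℕ∞))
      (Metric.isClosed_closedBall (x := (0 : EuclideanSpace ℝ (Fin n))) (ε := δ/4))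
      (Metric.isOpen_ball (x := (0 : EuclideanSpace ℝ (Fin n))) (ε := δ/2)).isClosed_compl
      (by
        rw [Set.disjoint_left]
        intro y hy hy2
        rw [Metric.mem_closedBall, dist_zero_right] at hy
        exact hy2 (by rw [Metric.mem_ball, dist_zero_right]; linarith))
  have hχC : ContDiff ℝ (⊤ : ℕ∞) χ := by
    have h := contMDiff_iff_contDiff.mp χ.contMDiff
    exact_mod_cast h
  have hχd : Differentiable ℝ χ := hχC.differentiable (by simp)
  have hχcont : Continuous (χ : EuclideanSpace ℝ (Fin n) → ℝ) := hχC.continuous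
  have hχsmall : ∀ y : EuclideanSpace ℝ (Fin n), ‖y‖ ≤ δ/4 → χ y = 0 := fun y hy =>
    hχ0 (by rw [Metric.mem_closedBall, dist_zero_right]; exact hy)
  have hχone : ∀ y : EuclideanSpace ℝ (Fin n), δ/2 ≤ ‖y‖ → χ y = 1 := fun y hy =>
    hχ1 (by rw [Set.mem_compl_iff, Metric.mem_ball, dist_zero_right]; push_neg; exact hy)
  -- basic facts about g
  have hgd : Differentiable ℝ g := hg.differentiable one_ne_zero
  have hgcont : Continuous g := hg.continuous
  have hg'cont : Continuous (fderiv ℝ g) := hg.continuous_fderiv one_ne_zero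
  have hgK : ∀ x ∉ K, g x = 0 := fun x hx => image_eq_zero_of_notMem_tsupport hx
  have hg'K : ∀ x ∉ K, fderiv ℝ g x = 0 := by
    intro x hx
    by_contra h
    exact hx (support_fderiv_subset ℝ (Function.mem_support.mpr h))
  have hKopen : IsOpen Kᶜ := hKcl.isOpen_compl
  have hgev : ∀ x ∉ K, ∀ᶠ y in 𝓝 x, y ∉ K := fun x hx =>
    eventually_of_mem (hKopen.mem_nhds hx) (fun y hy => hy)
  set gsq := fun y : EuclideanSpace ℝ (Fin n) => g y * g y with hgsqdef
  have hgsqd : Differentiable ℝ gsq := hgd.mul hgd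
  have hgsq' : ∀ x, fderiv ℝ gsq x = g x • fderiv ℝ g x + g x • fderiv ℝ g x := fun x =>
    ((hgd x).hasFDerivAt.mul (hgd x).hasFDerivAt).fderiv
  have hgsq'app : ∀ x v, fderiv ℝ gsq x v = 2 * g x * fderiv ℝ g x v := by
    intro x v; rw [hgsq']; simp; ring
  -- representation of f
  have hfG : f = fun y => ftGf a (ftQ n y) * g y := by
    funext y
    by_cases hy : y ∈ K
    · obtain ⟨hy0, hy1⟩ := hKU y hy
      have hb : 0 < 1 - Real.log ‖y‖ := by have := Real.log_neg hy0 hy1; linarith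
      have hlog : Real.log (ftQ n y) = 2 * Real.log ‖y‖ := by
        rw [ftQ_eq_norm, Real.log_pow]; push_cast; ring
      have h1 : ‖y‖ ^ a = (ftQ n y) ^ (a/2) := by
        rw [ftQ_eq_norm, ← Real.rpow_natCast ‖y‖ 2, ← Real.rpow_mul (norm_nonneg y)]
        congr 1
        push_cast
        rw [ha]; ring
      have h2 : (X₁ ‖y‖) ^ (-(1:ℝ)/2) = (1 - Real.log (ftQ n y) / 2) ^ ((1:ℝ)/2) := by
        unfold X₁
        rw [hlog, show 1 - 2 * Real.log ‖y‖ / 2 = 1 - Real.log ‖y‖ by ring,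
          show (-(1:ℝ)/2) = -((1:ℝ)/2) by ring,
          Real.rpow_neg (inv_nonneg.mpr hb.le), Real.inv_rpow hb.le, inv_inv]
      rw [hf]
      unfold ftGf
      rw [h1, h2]
    · rw [hf, hgK y hy]; simp
  have hfK : ∀ x ∉ K, f x = 0 := fun x hx => by rw [hfG]; simp [hgK x hx]
  have hfd'K : ∀ x ∉ K, fderiv ℝ f x = 0 := by
    intro x hx
    have hev : f =ᶠ[𝓝 x] (fun _ => (0:ℝ)) :=
      eventually_of_mem (hKopen.mem_nhds hx) (fun y hy => hfK y hy)
    rw [hev.fderiv_eq]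
    exact fderiv_const_apply 0
  have hq01 : ∀ x : EuclideanSpace ℝ (Fin n), 0 < ‖x‖ → ‖x‖ < 1 →
      0 < ftQ n x ∧ ftQ n x < 1 := by
    intro x hx0 hx1
    constructor
    · exact ftQ_pos hx0
    · rw [ftQ_eq_norm]; nlinarith
  have hfDeriv : ∀ x : EuclideanSpace ℝ (Fin n), 0 < ‖x‖ → ‖x‖ < 1 → HasFDerivAt f
      (ftGf a (ftQ n x) • fderiv ℝ g x + g x • (ftGf' a (ftQ n x) • ftDq n x)) x := by
    intro x hx0 hx1
    obtain ⟨hq0, hq1⟩ := hq01 x hx0 hx1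
    have hGq : HasFDerivAt (fun y => ftGf a (ftQ n y)) (ftGf' a (ftQ n x) • ftDq n x) x :=
      (ft_hasDerivAt_G hq0 hq1).comp_hasFDerivAt x (ftQ_hasFDerivAt n x)
    have h := hGq.mul (hgd x).hasFDerivAt
    rw [hfG]
    exact h
  -- the vector field W
  set W : Fin n → EuclideanSpace ℝ (Fin n) → ℝ :=
    fun i y => χ y * (ftPf a (ftQ n y) * y i) with hWdef
  have hWev0 : ∀ i : Fin n, (W i) =ᶠ[𝓝 (0 : EuclideanSpace ℝ (Fin n))] (fun _ => (0:ℝ)) := by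
    intro i
    refine eventually_of_mem (Metric.ball_mem_nhds 0 (by positivity : (0:ℝ) < δ/4)) ?_
    intro y hy
    rw [Metric.mem_ball, dist_zero_right] at hy
    simp only [hWdef, hχsmall y hy.le, zero_mul]
  have hWd : ∀ i, Differentiable ℝ (W i) := by
    intro i x
    by_cases hx : x = 0
    · subst hx
      exact (differentiableAt_const 0).congr_of_eventuallyEq (hWev0 i)
    · have hx0 : 0 < ‖x‖ := norm_pos_iff.mpr hx
      have hq0 : 0 < ftQ n x := ftQ_pos hx0
      have hPq : HasFDerivAt (fun y => ftPf a (ftQ n y)) (ftPf' a (ftQ n x) • ftDq n x) x :=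
        (ft_hasDerivAt_P hq0).comp_hasFDerivAt x (ftQ_hasFDerivAt n x)
      exact (hχd x).mul (hPq.differentiableAt.mul
        ((EuclideanSpace.proj (𝕜 := ℝ) i).differentiable x))
  have hWfderiv : ∀ (i : Fin n) (x : EuclideanSpace ℝ (Fin n)), δ/2 < ‖x‖ →
      fderiv ℝ (W i) x (EuclideanSpace.single i (1:ℝ))
        = ftPf a (ftQ n x) + x i * (ftPf' a (ftQ n x) * (2 * x i)) := by
    intro i x hx
    have hx0 : 0 < ‖x‖ := lt_trans (by positivity) hx
    have hq0 : 0 < ftQ n x := ftQ_pos hx0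
    have hev : (W i) =ᶠ[𝓝 x] (fun y => ftPf a (ftQ n y) * y i) := by
      refine eventually_of_mem
        ((isOpen_lt continuous_const continuous_norm).mem_nhds (by exact hx)) ?_
      intro y hy
      simp only [hWdef, hχone y (le_of_lt hy), one_mul]
    have hPq : HasFDerivAt (fun y => ftPf a (ftQ n y)) (ftPf' a (ftQ n x) • ftDq n x) x :=
      (ft_hasDerivAt_P hq0).comp_hasFDerivAt x (ftQ_hasFDerivAt n x)
    have hmul : HasFDerivAt (fun y : EuclideanSpace ℝ (Fin n) => ftPf a (ftQ n y) * y i)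
        (ftPf a (ftQ n x) • (EuclideanSpace.proj (𝕜 := ℝ) i)
          + x i • (ftPf' a (ftQ n x) • ftDq n x)) x :=
      hPq.mul (EuclideanSpace.proj (𝕜 := ℝ) i).hasFDerivAt
    rw [hev.fderiv_eq, hmul.fderiv]
    simp only [ContinuousLinearMap.add_apply, ContinuousLinearMap.coe_smul', Pi.smul_apply,
      smul_eq_mul, ftDq_apply]
    have : (EuclideanSpace.proj (𝕜 := ℝ) i) (EuclideanSpace.single i (1:ℝ)) = 1 := by
      simp [EuclideanSpace.single_apply]
    rw [this]
    ring
  -- continuity and support of W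
  have hWcont : ∀ i, Continuous (W i) := by
    intro i
    rw [continuous_iff_continuousAt]
    intro x
    by_cases hx : x = 0
    · subst hx
      exact continuousAt_const.congr (hWev0 i).symm
    · have hx0 : 0 < ‖x‖ := norm_pos_iff.mpr hx
      exact (hχcont.continuousAt).mul
        (((ft_contAt_Pf a (ftQ_pos hx0)).comp (ftQ_continuous n).continuousAt).mul
          ((EuclideanSpace.proj (𝕜 := ℝ) i).continuous.continuousAt))
  
  have hgsqcont : Continuous gsq := hgcont.mul hgcont
  have hgsqK : ∀ x ∉ K, gsq x = 0 := by
    intro x hx; simp only [hgsqdef]; rw [hgK x hx, mul_zero]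
  have hgsq'K : ∀ x ∉ K, fderiv ℝ gsq x = 0 := by
    intro x hx; rw [hgsq' x, hg'K x hx]; simp
  -- expansion of |∇f|²
  set S1 := fun x : EuclideanSpace ℝ (Fin n) =>
    ∑ i, (ftGf a (ftQ n x) * fderiv ℝ g x (EuclideanSpace.single i (1:ℝ))
      + g x * (ftGf' a (ftQ n x) * (2 * x i)))^2 with hS1def
  have hfdapp : ∀ (x : EuclideanSpace ℝ (Fin n)), 0 < ‖x‖ → ‖x‖ < 1 → ∀ i : Fin n,
      fderiv ℝ f x (EuclideanSpace.single i (1:ℝ))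
        = ftGf a (ftQ n x) * fderiv ℝ g x (EuclideanSpace.single i (1:ℝ))
          + g x * (ftGf' a (ftQ n x) * (2 * x i)) := by
    intro x hx0 hx1 i
    rw [(hfDeriv x hx0 hx1).fderiv]
    simp only [ContinuousLinearMap.add_apply, ContinuousLinearMap.coe_smul', Pi.smul_apply,
      smul_eq_mul, ftDq_apply]
  have hT1S1 : ∀ x, ‖fderiv ℝ f x‖^2 = S1 x := by
    intro x
    by_cases hx : x ∈ K
    · obtain ⟨hx0, hx1⟩ := hKU x hx
      rw [ft_dual_norm_sq (fderiv ℝ f x)]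
      simp only [hS1def]
      exact Finset.sum_congr rfl fun i _ => by rw [hfdapp x hx0 hx1 i]
    · rw [hfd'K x hx]
      simp only [hS1def]
      simp [hgK x hx, hg'K x hx]
  have hS1K : ∀ x ∉ K, S1 x = 0 := by
    intro x hx; simp only [hS1def]; simp [hgK x hx, hg'K x hx]
  have hS1cont : Continuous S1 := by
    rw [continuous_iff_continuousAt]
    intro x
    by_cases hx : x ∈ K
    · obtain ⟨hx0, hx1⟩ := hKU x hx
      obtain ⟨hq0, hq1⟩ := hq01 x hx0 hx1
      simp only [hS1def]
      refine tendsto_finset_sum _ fun i _ => ?_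
      exact ((((ft_contAt_Gf a hq0).comp (ftQ_continuous n).continuousAt).mul
        ((hg'cont.clm_apply continuous_const).continuousAt)).add
        ((hgcont.continuousAt).mul (((ft_contAt_Gf' a hq0 hq1).comp
          (ftQ_continuous n).continuousAt).mul
          ((continuous_const.mul ((EuclideanSpace.proj (𝕜 := ℝ) i).continuous)).continuousAt)))).pow 2
    · have hev : S1 =ᶠ[𝓝 x] (fun _ => 0) := by
        filter_upwards [hgev x hx] with y hy
        simp only [hS1def]
        simp [hgK y hy, hg'K y hy]
      exact continuousAt_const.congr hev.symm
  -- the integration-by-parts integrands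
  set m := fun (i : Fin n) (x : EuclideanSpace ℝ (Fin n)) =>
    W i x * fderiv ℝ gsq x (EuclideanSpace.single i (1:ℝ)) with hmdef
  set d := fun (i : Fin n) (x : EuclideanSpace ℝ (Fin n)) =>
    fderiv ℝ (W i) x (EuclideanSpace.single i (1:ℝ)) * gsq x with hddef
  have hmK : ∀ (i : Fin n), ∀ x ∉ K, m i x = 0 := by
    intro i x hx; simp only [hmdef]; rw [hgsq'K x hx]; simp
  have hdK : ∀ (i : Fin n), ∀ x ∉ K, d i x = 0 := by
    intro i x hx; simp only [hddef]; rw [hgsqK x hx, mul_zero]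
  have hmcont : ∀ i, Continuous (m i) := by
    intro i
    have hrw : (m i) = fun x => W i x
        * (2 * g x * fderiv ℝ g x (EuclideanSpace.single i (1:ℝ))) := by
      funext x; simp only [hmdef]; rw [hgsq'app]
    rw [hrw]
    exact (hWcont i).mul ((continuous_const.mul hgcont).mul (hg'cont.clm_apply continuous_const))
  have hdeq : ∀ i, d i = fun x =>
      (ftPf a (ftQ n x) + x i * (ftPf' a (ftQ n x) * (2 * x i))) * gsq x := by
    intro i; funext x
    by_cases hgx : g x = 0
    · simp only [hddef, hgsqdef]
      simp [hgx]
    · have hxK : x ∈ K := subset_tsupport g (Function.mem_support.mpr hgx)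
      have hδx : δ/2 < ‖x‖ := lt_of_lt_of_le (by linarith) (hKnorm x hxK)
      simp only [hddef]
      rw [hWfderiv i x hδx]
  have hdcont : ∀ i, Continuous (d i) := by
    intro i
    rw [hdeq i, continuous_iff_continuousAt]
    intro x
    by_cases hx : x ∈ K
    · obtain ⟨hx0, hx1⟩ := hKU x hx
      obtain ⟨hq0, hq1⟩ := hq01 x hx0 hx1
      exact ((((ft_contAt_Pf a hq0).comp (ftQ_continuous n).continuousAt).add
        ((((EuclideanSpace.proj (𝕜 := ℝ) i).continuous).continuousAt).mul
          ((((ft_contAt_Pf' a hq0).comp (ftQ_continuous n).continuousAt)).mul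
            ((continuous_const.mul
              ((EuclideanSpace.proj (𝕜 := ℝ) i).continuous)).continuousAt)))).mul
        (hgsqcont.continuousAt))
    · have hev : (fun x => (ftPf a (ftQ n x) + x i * (ftPf' a (ftQ n x) * (2 * x i))) * gsq x)
          =ᶠ[𝓝 x] (fun _ => 0) := by
        filter_upwards [hgev x hx] with y hy
        rw [hgsqK y hy, mul_zero]
      exact continuousAt_const.congr hev.symm
  -- continuity of the remaining integrands
  set T2 := fun x : EuclideanSpace ℝ (Fin n) => f x ^ 2 / ‖x‖ ^ 2 with hT2def
  set T3 := fun x : EuclideanSpace ℝ (Fin n) => f x ^ 2 / ‖x‖ ^ 2 * (X₁ ‖x‖)^2 with hT3def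
  set T4 := fun x : EuclideanSpace ℝ (Fin n) =>
    ‖x‖ ^ ((2:ℝ) - n) * ‖fderiv ℝ g x‖^2 * (X₁ ‖x‖)⁻¹ with hT4def
  have hfcont : Continuous f := by
    rw [continuous_iff_continuousAt]
    intro x
    by_cases hx : x ∈ K
    · obtain ⟨hx0, hx1⟩ := hKU x hx
      rw [hfG]
      exact ((ft_contAt_Gf a (ftQ_pos hx0)).comp
        (ftQ_continuous n).continuousAt).mul hgcont.continuousAt
    · have hev : f =ᶠ[𝓝 x] fun _ => 0 :=
        eventually_of_mem (hKopen.mem_nhds hx) fun y hy => hfK y hy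
      exact continuousAt_const.congr hev.symm
  have hX₁ct : ∀ x : EuclideanSpace ℝ (Fin n), 0 < ‖x‖ → ‖x‖ < 1 →
      ContinuousAt (fun y => X₁ ‖y‖) x := by
    intro x hx0 hx1
    have hb : 0 < 1 - Real.log ‖x‖ := by have := Real.log_neg hx0 hx1; linarith
    unfold X₁
    exact (continuousAt_const.sub
      ((Real.continuousAt_log hx0.ne').comp continuous_norm.continuousAt)).inv₀ hb.ne'
  have hT2K : ∀ x ∉ K, T2 x = 0 := by
    intro x hx; simp only [hT2def]; rw [hfK x hx]; simp
  have hT3K : ∀ x ∉ K, T3 x = 0 := by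
    intro x hx; simp only [hT3def]; rw [hfK x hx]; simp
  have hT4K : ∀ x ∉ K, T4 x = 0 := by
    intro x hx; simp only [hT4def]; rw [hg'K x hx]; simp
  have hT2cont : Continuous T2 := by
    rw [continuous_iff_continuousAt]
    intro x
    by_cases hx : x ∈ K
    · obtain ⟨hx0, hx1⟩ := hKU x hx
      have hne : ‖x‖^2 ≠ 0 := by positivity
      exact ((hfcont.pow 2).continuousAt).div ((continuous_norm.pow 2).continuousAt) hne
    · have hev : T2 =ᶠ[𝓝 x] fun _ => 0 := by
        filter_upwards [hgev x hx] with y hy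
        exact hT2K y hy
      exact continuousAt_const.congr hev.symm
  have hT3cont : Continuous T3 := by
    rw [continuous_iff_continuousAt]
    intro x
    by_cases hx : x ∈ K
    · obtain ⟨hx0, hx1⟩ := hKU x hx
      have hne : ‖x‖^2 ≠ 0 := by positivity
      exact (((hfcont.pow 2).continuousAt).div
        ((continuous_norm.pow 2).continuousAt) hne).mul ((hX₁ct x hx0 hx1).pow 2)
    · have hev : T3 =ᶠ[𝓝 x] fun _ => 0 := by
        filter_upwards [hgev x hx] with y hy
        exact hT3K y hy
      exact continuousAt_const.congr hev.symm
  have hT4cont : Continuous T4 := by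
    rw [continuous_iff_continuousAt]
    intro x
    by_cases hx : x ∈ K
    · obtain ⟨hx0, hx1⟩ := hKU x hx
      have hb : 0 < 1 - Real.log ‖x‖ := by have := Real.log_neg hx0 hx1; linarith
      have hXne : X₁ ‖x‖ ≠ 0 := by unfold X₁; exact inv_ne_zero hb.ne'
      exact ((continuous_norm.continuousAt.rpow_const (Or.inl hx0.ne')).mul
        ((hg'cont.norm.pow 2).continuousAt)).mul ((hX₁ct x hx0 hx1).inv₀ hXne)
    · have hev : T4 =ᶠ[𝓝 x] fun _ => 0 := by
        filter_upwards [hgev x hx] with y hy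
        exact hT4K y hy
      exact continuousAt_const.congr hev.symm
  -- integrability
  have hInt : ∀ (h : EuclideanSpace ℝ (Fin n) → ℝ), Continuous h → (∀ x ∉ K, h x = 0) →
      Integrable h := fun h hc h0 =>
    hc.integrable_of_hasCompactSupport (HasCompactSupport.intro hKc h0)
  have hintS1 : Integrable S1 := hInt S1 hS1cont hS1K
  have hintm : ∀ i, Integrable (m i) := fun i => hInt _ (hmcont i) (hmK i)
  have hintd : ∀ i, Integrable (d i) := fun i => hInt _ (hdcont i) (hdK i)
  have hintT2 : Integrable T2 := hInt _ hT2cont hT2K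
  have hintT3 : Integrable T3 := hInt _ hT3cont hT3K
  have hintT4 : Integrable T4 := hInt _ hT4cont hT4K
  have hintW : ∀ i, Integrable (fun x => W i x * gsq x) := fun i =>
    hInt _ ((hWcont i).mul hgsqcont) (fun x hx => by rw [hgsqK x hx, mul_zero])
  -- the key pointwise identity
  have key : ∀ x, S1 x = a^2 * T2 x + (1/4) * T3 x + (∑ i, m i x) + (∑ i, d i x) + T4 x := by
    intro x
    by_cases hx : x ∈ K
    · obtain ⟨hx0, hx1⟩ := hKU x hx
      obtain ⟨hq0, hq1⟩ := hq01 x hx0 hx1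
      have hδx : δ/2 < ‖x‖ := lt_of_lt_of_le (by linarith) (hKnorm x hx)
      have hχx : χ x = 1 := hχone x (le_of_lt hδx)
      have hlog : Real.log (ftQ n x) = 2 * Real.log ‖x‖ := by
        rw [ftQ_eq_norm, Real.log_pow]; push_cast; ring
      have hb : 0 < 1 - Real.log ‖x‖ := by have := Real.log_neg hx0 hx1; linarith
      have hueq : 1 - Real.log (ftQ n x) / 2 = 1 - Real.log ‖x‖ := by rw [hlog]; ring
      have hupos : 0 < 1 - Real.log (ftQ n x) / 2 := by rw [hueq]; exact hb
      have hX : X₁ ‖x‖ = (1 - Real.log (ftQ n x) / 2)⁻¹ := by unfold X₁; rw [hueq]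
      have hpow : (ftQ n x) ^ a = (ftQ n x)^(a-1) * (ftQ n x) := by
        rw [← Real.rpow_add_one hq0.ne']; congr 1; ring
      have hnorm2 : ‖x‖^2 = ftQ n x := (ftQ_eq_norm n x).symm
      have hfx : f x = ftGf a (ftQ n x) * g x := by rw [hfG]
      have hsq_sum : (∑ i, (x i)^2) = ftQ n x := rfl
      have hT2x : T2 x = (ftQ n x)^(a-1) * (1 - Real.log (ftQ n x)/2) * (g x)^2 := by
        simp only [hT2def]
        rw [hfx, hnorm2, mul_pow, ft_idG2 hq0 hq1, hpow, div_eq_iff hq0.ne']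
        ring
      have hT3x : T3 x = (ftQ n x)^(a-1) * (1 - Real.log (ftQ n x)/2)⁻¹ * (g x)^2 := by
        simp only [hT3def]
        have habs : ∀ (P S U G : ℝ), S ≠ 0 → U ≠ 0 →
            P * S * U * G / S * (U⁻¹)^2 = P * U⁻¹ * G := by
          intro P S U G hS hU
          field_simp
        rw [hfx, hnorm2, hX, mul_pow, ft_idG2 hq0 hq1, hpow]
        exact habs _ _ _ _ hq0.ne' hupos.ne'
      have h2n : ‖x‖ ^ ((2:ℝ) - n) = (ftQ n x)^a := by
        rw [ftQ_eq_norm, ← Real.rpow_natCast ‖x‖ 2, ← Real.rpow_mul (norm_nonneg x)]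
        congr 1
        push_cast
        rw [hna]; ring
      have hT4x : T4 x = ((ftQ n x)^a * (1 - Real.log (ftQ n x)/2))
          * (∑ i, (fderiv ℝ g x (EuclideanSpace.single i (1:ℝ)))^2) := by
        simp only [hT4def]
        rw [ft_dual_norm_sq (fderiv ℝ g x), hX, inv_inv, h2n]
        ring
      have hm_i : ∀ i : Fin n, m i x = (ftPf a (ftQ n x) * (2 * g x))
          * (x i * fderiv ℝ g x (EuclideanSpace.single i (1:ℝ))) := by
        intro i
        simp only [hmdef, hWdef]
        rw [hgsq'app, hχx]
        ring
      have hsum_m : (∑ i, m i x) = (ftPf a (ftQ n x) * (2 * g x)) * fderiv ℝ g x x := by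
        rw [Finset.sum_congr rfl fun i _ => hm_i i, ← Finset.mul_sum,
          ← ft_apply_eq_sum (fderiv ℝ g x) x]
      have hd_i : ∀ i : Fin n, d i x
          = (ftPf a (ftQ n x) + x i * (ftPf' a (ftQ n x) * (2 * x i))) * gsq x := by
        intro i
        simp only [hddef]
        rw [hWfderiv i x hδx]
      have hsum_d : (∑ i, d i x) = ((n:ℝ) * ftPf a (ftQ n x)
          + 2 * (ftQ n x) * ftPf' a (ftQ n x)) * gsq x := by
        rw [Finset.sum_congr rfl fun i _ => hd_i i, ← Finset.sum_mul]
        congr 1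
        rw [Finset.sum_add_distrib, Finset.sum_const, Finset.card_univ, Fintype.card_fin,
          nsmul_eq_mul]
        have h2 : ∀ i : Fin n, x i * (ftPf' a (ftQ n x) * (2 * x i))
            = (2 * ftPf' a (ftQ n x)) * (x i)^2 := fun i => by ring
        rw [Finset.sum_congr rfl fun i _ => h2 i, ← Finset.mul_sum, hsq_sum]
        ring
      have hS1x : S1 x = (ftGf a (ftQ n x))^2
            * (∑ i, (fderiv ℝ g x (EuclideanSpace.single i (1:ℝ)))^2)
          + ((2 * ftGf a (ftQ n x) * ftGf' a (ftQ n x)) * (2 * g x)) * fderiv ℝ g x x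
          + (4 * (g x)^2 * (ftGf' a (ftQ n x))^2) * ftQ n x := by
        simp only [hS1def]
        have expand : ∀ i : Fin n,
            (ftGf a (ftQ n x) * fderiv ℝ g x (EuclideanSpace.single i (1:ℝ))
              + g x * (ftGf' a (ftQ n x) * (2 * x i)))^2
            = (ftGf a (ftQ n x))^2 * (fderiv ℝ g x (EuclideanSpace.single i (1:ℝ)))^2
              + ((2 * ftGf a (ftQ n x) * ftGf' a (ftQ n x)) * (2 * g x))
                * (x i * fderiv ℝ g x (EuclideanSpace.single i (1:ℝ)))
              + (4 * (g x)^2 * (ftGf' a (ftQ n x))^2) * (x i)^2 := fun i => by ring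
        rw [Finset.sum_congr rfl fun i _ => expand i, Finset.sum_add_distrib,
          Finset.sum_add_distrib, ← Finset.mul_sum, ← Finset.mul_sum, ← Finset.mul_sum,
          hsq_sum, ← ft_apply_eq_sum (fderiv ℝ g x) x]
      rw [hS1x, hT2x, hT3x, hT4x, hsum_m, hsum_d]
      have hG2 := ft_idG2 (a := a) hq0 hq1
      have hGG := ft_idGG (a := a) hq0 hq1
      have hMain := ft_idMain (a := a) hq0 hq1
      have hDiv := ft_idDiv (a := a) n hna hq0
      simp only [hgsqdef]
      linear_combination (∑ i, (fderiv ℝ g x (EuclideanSpace.single i (1:ℝ)))^2) * hG2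
        + (2 * g x * fderiv ℝ g x x) * hGG + (g x)^2 * hMain - (g x)^2 * hDiv
    · rw [hS1K x hx, hT2K x hx, hT3K x hx, hT4K x hx,
        Finset.sum_congr rfl fun i _ => hmK i x hx, Finset.sum_congr rfl fun i _ => hdK i x hx]
      simp
  -- integration by parts
  have hibp : ∀ i : Fin n, (∫ x, m i x) = - ∫ x, d i x := by
    intro i
    simp only [hmdef, hddef]
    refine integral_mul_fderiv_eq_neg_fderiv_mul_of_integrable ?_ ?_ ?_ (fun x _ => hWd i x) (fun x _ => hgsqd x)
    · simpa only [hddef] using hintd i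
    · simpa only [hmdef] using hintm i
    · exact hintW i
  have hcancel : (∑ i, ∫ x, m i x) + (∑ i, ∫ x, d i x) = 0 := by
    rw [← Finset.sum_add_distrib]
    exact Finset.sum_eq_zero fun i _ => by rw [hibp i]; ring
  -- pass from set integrals to integrals over the whole space
  have hU1 : ∀ x ∉ {x : EuclideanSpace ℝ (Fin n) | 0 < ‖x‖ ∧ ‖x‖ < 1},
      ‖fderiv ℝ f x‖^2 = 0 := by
    intro x hx
    have hxK : x ∉ K := fun h => hx (hgs h)
    rw [hfd'K x hxK]; simp
  have hU2 : ∀ x ∉ {x : EuclideanSpace ℝ (Fin n) | 0 < ‖x‖ ∧ ‖x‖ < 1}, T2 x = 0 :=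
    fun x hx => hT2K x (fun h => hx (hgs h))
  have hU3 : ∀ x ∉ {x : EuclideanSpace ℝ (Fin n) | 0 < ‖x‖ ∧ ‖x‖ < 1}, T3 x = 0 :=
    fun x hx => hT3K x (fun h => hx (hgs h))
  have hU4 : ∀ x ∉ {x : EuclideanSpace ℝ (Fin n) | 0 < ‖x‖ ∧ ‖x‖ < 1}, T4 x = 0 :=
    fun x hx => hT4K x (fun h => hx (hgs h))
  rw [setIntegral_eq_integral_of_forall_compl_eq_zero hU1,
    setIntegral_eq_integral_of_forall_compl_eq_zero hU2,
    setIntegral_eq_integral_of_forall_compl_eq_zero hU3,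
    setIntegral_eq_integral_of_forall_compl_eq_zero hU4]
  rw [show (fun x => ‖fderiv ℝ f x‖ ^ 2) = S1 from funext hT1S1]
  have hIS1 : (∫ x, S1 x) = a^2 * (∫ x, T2 x) + (1/4) * (∫ x, T3 x)
      + (∑ i, ∫ x, m i x) + (∑ i, ∫ x, d i x) + ∫ x, T4 x := by
    have step : (∫ x, S1 x) = ∫ x, (a^2 * T2 x + (1/4) * T3 x
        + (∑ i, m i x) + (∑ i, d i x) + T4 x) := integral_congr_ae (ae_of_all _ key)
    rw [step]
    have IA : Integrable (fun x => a^2 * T2 x) := hintT2.const_mul _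
    have IB : Integrable (fun x => (1/4 : ℝ) * T3 x) := hintT3.const_mul _
    have IC : Integrable (fun x => ∑ i, m i x) := integrable_finset_sum _ fun i _ => hintm i
    have ID : Integrable (fun x => ∑ i, d i x) := integrable_finset_sum _ fun i _ => hintd i
    have IAB : Integrable (fun x => a^2 * T2 x + (1/4 : ℝ) * T3 x) := IA.add IB
    have IABC : Integrable (fun x => a^2 * T2 x + (1/4 : ℝ) * T3 x + ∑ i, m i x) := IAB.add IC
    have IABCD : Integrable (fun x => a^2 * T2 x + (1/4 : ℝ) * T3 x
        + (∑ i, m i x) + ∑ i, d i x) := IABC.add ID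
    rw [integral_add IABCD hintT4, integral_add IABC ID, integral_add IAB IC,
      integral_add IA IB, MeasureTheory.integral_const_mul, MeasureTheory.integral_const_mul,
      integral_finset_sum _ (fun i _ => hintm i), integral_finset_sum _ (fun i _ => hintd i)]
  rw [hIS1]
  have haa : (((n:ℝ) - 2)/2)^2 = a^2 := by rw [ha]; ring
  rw [haa]
  linarith [hcancel]

-- #print axioms filippas_tertikas_identity
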